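/- Let G = K_{1,m} with m ≥ 3, and let H be a graph in which every vertex has degree at least 1. Then Γ(G □ H) > |V(H)|. -/

import Mathlib

open SimpleGraph

variable {V : Type*} {W : Type*}

/-- `D` is a dominating set of `G`: every vertex outside `D` has a neighbor in `D`. -/
def IsDomSet (G : SimpleGraph V) (D : Set V) : Prop :=
  ∀ v ∉ D, ∃ u ∈ D, G.Adj u v

/-- `D` is a minimal dominating set: dominating, and no proper subset is dominating. -/
def IsMinDomSet (G : SimpleGraph V) (D : Set V) : Prop :=
  IsDomSet G D ∧ ∀ D' ⊂ D, ¬ IsDomSet G D'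

/-- The upper domination number `Γ(G)`: maximum size of a minimal dominating set. -/
noncomputable def upperDom (G : SimpleGraph V) : ℕ :=
  sSup {n | ∃ D : Set V, IsMinDomSet G D ∧ D.ncard = n}

/-- The domination number `γ(G)`: minimum size of a dominating set. -/
noncomputable def domNum (G : SimpleGraph V) : ℕ :=
  sInf {n | ∃ D : Set V, IsDomSet G D ∧ D.ncard = n}

/-- The set of vertices of `D` having a private `D`-neighbor. -/
def privSet (G : SimpleGraph V) (D : Set V) : Set V :=
  {v ∈ D | ∃ u, u ∉ D ∧ G.Adj v u ∧ ∀ w ∈ D, G.Adj w u → w = v}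

/-- `I` is an independent set of `G`. -/
def IsIndep (G : SimpleGraph V) (I : Set V) : Prop :=
  ∀ u ∈ I, ∀ v ∈ I, ¬ G.Adj u v

/-- `I` is a maximal independent set of `G`. -/
def IsMaxIndep (G : SimpleGraph V) (I : Set V) : Prop :=
  IsIndep G I ∧ ∀ J, IsIndep G J → I ⊆ J → J = I

/-- The independence number `α(G)`. -/
noncomputable def indepNum (G : SimpleGraph V) : ℕ :=
  sSup {n | ∃ I : Set V, IsIndep G I ∧ I.ncard = n}

/-- The star `K_{1,n}` on `Fin (n+1)` with center `0`. -/
def starGraph (n : ℕ) : SimpleGraph (Fin (n + 1)) :=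
  SimpleGraph.fromRel (fun i _ => i = 0)

/-- The graph `X_n`: two copies of `K_{n+1}` (on `u_0,…,u_n` and `v_0,…,v_n`)
joined by the matching edges `u_i v_i` for `i ≠ 0`. -/
def Xgraph (n : ℕ) : SimpleGraph (Fin (n + 1) ⊕ Fin (n + 1)) :=
  SimpleGraph.fromRel (fun x y => match x, y with
    | .inl _, .inl _ => True
    | .inr _, .inr _ => True
    | .inl i, .inr j => i = j ∧ i ≠ 0
    | _, _ => False)

/-- The graph `X_n'`: `X_n` with `u_0` deleted.  Vertices `inl i` represent
`u_{i+1}` (`i : Fin n`) and `inr j` represent `v_j` (`j : Fin (n+1)`); each side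
induces a complete graph and `u_{i+1}` is matched to `v_{i+1}`. -/
def Xgraph' (n : ℕ) : SimpleGraph (Fin n ⊕ Fin (n + 1)) :=
  SimpleGraph.fromRel (fun x y => match x, y with
    | .inl _, .inl _ => True
    | .inr _, .inr _ => True
    | .inl i, .inr j => (j : ℕ) = (i : ℕ) + 1
    | _, _ => False)

/-!
Take a minimal dominating set `D` of `H`. As `H` has no isolated vertices, `R = Dᶜ` dominates
`H` too (Ore). In `K_{1,m} □ H` the set `S = ({u_m} × R) ∪ ({u_1, …, u_{m-1}} × D)` is
dominating, and it is minimal because each of its vertices has a private neighbour: `(u_0, w)`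
for `(u_m, w)`, and `(u_i, x)` for `(u_i, w)` when `x` is a private neighbour of `w` in `H`.
Hence `Γ ≥ |S| = |R| + (m - 1)|D| > |R| + |D| = |V(H)|`, using `m ≥ 3` and `D ≠ ∅`.
-/

section Domination

variable {G : SimpleGraph V} {D : Set V}

theorem isMinDomSet_iff_minimal : IsMinDomSet G D ↔ Minimal (IsDomSet G) D :=
  minimal_iff_forall_lt.symm

theorem exists_isMinDomSet [Finite V] (G : SimpleGraph V) : ∃ D, IsMinDomSet G D := by
  obtain ⟨D, -, hD⟩ := exists_minimal_le_of_wellFoundedLT (IsDomSet G) Set.univ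
    fun v hv => absurd (Set.mem_univ v) hv
  exact ⟨D, isMinDomSet_iff_minimal.2 hD⟩

theorem IsDomSet.nonempty [Nonempty V] (hD : IsDomSet G D) : D.Nonempty := by
  by_cases hv : Classical.arbitrary V ∈ D
  · exact ⟨_, hv⟩
  · obtain ⟨u, hu, -⟩ := hD _ hv
    exact ⟨u, hu⟩

theorem le_upperDom [Finite V] (hD : IsMinDomSet G D) : D.ncard ≤ upperDom G := by
  refine le_csSup ⟨Nat.card V, ?_⟩ ⟨D, hD, rfl⟩
  rintro n ⟨E, -, rfl⟩
  exact Set.ncard_le_card E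

def IsPrivateNbr (G : SimpleGraph V) (D : Set V) (d x : V) : Prop :=
  (x = d ∨ G.Adj d x) ∧ ∀ u ∈ D, (u = x ∨ G.Adj u x) → u = d

theorem isMinDomSet_iff_forall_exists_isPrivateNbr :
    IsMinDomSet G D ↔ IsDomSet G D ∧ ∀ d ∈ D, ∃ x, IsPrivateNbr G D d x := by
  refine ⟨fun hD => ⟨hD.1, fun d hd => ?_⟩, fun ⟨hD, hpriv⟩ => ⟨hD, fun D' hD'D hD' => ?_⟩⟩
  · have hnot : ¬ IsDomSet G (D \ {d}) :=
      hD.2 _ (Set.sdiff_singleton_ssubset.2 hd)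
    simp only [IsDomSet, not_forall, not_exists, not_and] at hnot
    obtain ⟨x, hx, hxD⟩ := hnot
    refine ⟨x, ?_, fun u hu hux => by_contra fun hud => ?_⟩
    · by_cases hxd : x = d
      · exact Or.inl hxd
      · obtain ⟨u, hu, hux⟩ := hD.1 x fun h => hx ⟨h, hxd⟩
        obtain rfl : u = d := by_contra fun hud => hxD u ⟨hu, hud⟩ hux
        exact Or.inr hux
    · rcases hux with rfl | hux
      · exact hx ⟨hu, hud⟩
      · exact hxD u ⟨hu, hud⟩ hux
  · obtain ⟨d, hd, hdD'⟩ := Set.exists_of_ssubset hD'D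
    obtain ⟨x, -, hx⟩ := hpriv d hd
    have hxD' : x ∉ D' := fun h => hdD' (hx x (hD'D.1 h) (Or.inl rfl) ▸ h)
    obtain ⟨u, hu, hux⟩ := hD' x hxD'
    exact hdD' (hx u (hD'D.1 hu) (Or.inr hux) ▸ hu)

/-- Ore's theorem. -/
theorem IsMinDomSet.isDomSet_compl (hD : IsMinDomSet G D) (hG : ∀ v, ∃ w, G.Adj v w) :
    IsDomSet G Dᶜ := by
  intro d hd
  rw [Set.notMem_compl_iff] at hd
  obtain ⟨x, hxd | hdx, hx⟩ := (isMinDomSet_iff_forall_exists_isPrivateNbr.1 hD).2 d hd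
  · obtain ⟨w, hdw⟩ := hG d
    refine ⟨w, fun hw => G.ne_of_adj hdw (hx w hw (Or.inr (hxd ▸ hdw.symm))).symm, hdw.symm⟩
  · refine ⟨x, fun hxD => G.ne_of_adj hdx (hx x hxD (Or.inl rfl)).symm, hdx.symm⟩

end Domination

section Star

variable {m : ℕ}

theorem starGraph_adj {a b : Fin (m + 1)} :
    (_root_.starGraph m).Adj a b ↔ a ≠ b ∧ (a = 0 ∨ b = 0) := by
  simp [_root_.starGraph]

/-- The paper's set `({u_m} × R) ∪ ({u_1, …, u_{m-1}} × D)` with `R = Dᶜ`; here `u_m` is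
`Fin.last m`. -/
def starBoxSet (m : ℕ) (D : Set W) : Set (Fin (m + 1) × W) :=
  {Fin.last m} ×ˢ Dᶜ ∪ {a | a ≠ 0 ∧ a ≠ Fin.last m} ×ˢ D

theorem mem_starBoxSet {D : Set W} {a : Fin (m + 1)} {w : W} :
    (a, w) ∈ starBoxSet m D ↔ a = Fin.last m ∧ w ∉ D ∨ a ≠ 0 ∧ a ≠ Fin.last m ∧ w ∈ D := by
  simp [starBoxSet, and_assoc]

variable {H : SimpleGraph W} {D : Set W}

theorem isDomSet_starBoxSet (hm : 2 ≤ m) (hD : IsDomSet H D) (hDc : IsDomSet H Dᶜ) :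
    IsDomSet ((_root_.starGraph m).boxProd H) (starBoxSet m D) := by
  have : NeZero m := ⟨by omega⟩
  have hl0 : Fin.last m ≠ 0 := Fin.last_pos'.ne'
  rintro ⟨a, w⟩ hp
  rw [mem_starBoxSet] at hp
  by_cases ha0 : a = 0
  · subst ha0
    by_cases hw : w ∈ D
    · have h10 : (⟨1, by omega⟩ : Fin (m + 1)) ≠ 0 := Fin.ne_of_val_ne one_ne_zero
      have h1l : (⟨1, by omega⟩ : Fin (m + 1)) ≠ Fin.last m := Fin.ne_of_val_ne (by simp; omega)
      exact ⟨(⟨1, by omega⟩, w), mem_starBoxSet.2 (Or.inr ⟨h10, h1l, hw⟩),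
        boxProd_adj_left.2 (_root_.starGraph_adj.2 ⟨h10, Or.inr rfl⟩)⟩
    · exact ⟨(Fin.last m, w), mem_starBoxSet.2 (Or.inl ⟨rfl, hw⟩),
        boxProd_adj_left.2 (_root_.starGraph_adj.2 ⟨hl0, Or.inr rfl⟩)⟩
  by_cases hal : a = Fin.last m
  · subst hal
    obtain ⟨x, hx, hxw⟩ := hDc w (by simpa using hp)
    exact ⟨(Fin.last m, x), mem_starBoxSet.2 (Or.inl ⟨rfl, hx⟩), boxProd_adj_right.2 hxw⟩
  · obtain ⟨u, hu, huw⟩ := hD w (by tauto)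
    exact ⟨(a, u), mem_starBoxSet.2 (Or.inr ⟨ha0, hal, hu⟩), boxProd_adj_right.2 huw⟩

theorem isMinDomSet_starBoxSet (hm : 2 ≤ m) (hD : IsMinDomSet H D) (hDc : IsDomSet H Dᶜ) :
    IsMinDomSet ((_root_.starGraph m).boxProd H) (starBoxSet m D) := by
  have : NeZero m := ⟨by omega⟩
  have hl0 : Fin.last m ≠ 0 := Fin.last_pos'.ne'
  rw [isMinDomSet_iff_forall_exists_isPrivateNbr]
  refine ⟨isDomSet_starBoxSet hm hD.1 hDc, ?_⟩
  rintro ⟨a, w⟩ hp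
  rcases mem_starBoxSet.1 hp with ⟨rfl, hw⟩ | ⟨ha0, hal, hw⟩
  · refine ⟨(0, w), Or.inr (boxProd_adj_left.2 (_root_.starGraph_adj.2 ⟨hl0, Or.inr rfl⟩)), ?_⟩
    rintro ⟨b, w'⟩ hu hux
    simp only [mem_starBoxSet, ne_eq, Prod.mk.injEq, boxProd_adj, _root_.starGraph_adj, or_true,
      and_true] at hu hux
    grind
  · obtain ⟨x, hxw, hx⟩ := (isMinDomSet_iff_forall_exists_isPrivateNbr.1 hD).2 w hw
    refine ⟨(a, x), ?_, ?_⟩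
    · rcases hxw with rfl | hwx
      · exact Or.inl rfl
      · exact Or.inr (boxProd_adj_right.2 hwx)
    rintro ⟨b, x'⟩ hu hux
    simp only [mem_starBoxSet, ne_eq, Prod.mk.injEq, boxProd_adj, _root_.starGraph_adj] at hu hux
    grind [IsPrivateNbr]

theorem ncard_starBoxSet [Finite W] [NeZero m] (D : Set W) :
    (starBoxSet m D).ncard = Dᶜ.ncard + (m - 1) * D.ncard := by
  have hleaves : ({a | a ≠ 0 ∧ a ≠ Fin.last m} : Set (Fin (m + 1))).ncard = m - 1 := by
    have h : {a | a ≠ 0 ∧ a ≠ Fin.last m} = ({0, Fin.last m} : Set (Fin (m + 1)))ᶜ := by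
      ext a; simp
    rw [h, Set.ncard_compl, Set.ncard_pair Fin.last_pos'.ne, Nat.card_fin]
    omega
  have hdisj : Disjoint ({Fin.last m} ×ˢ Dᶜ) ({a | a ≠ 0 ∧ a ≠ Fin.last m} ×ˢ D) := by
    rw [Set.disjoint_left]
    rintro ⟨a, w⟩ h1 h2
    simp_all
  rw [starBoxSet, Set.ncard_union_eq hdisj, Set.ncard_prod, Set.ncard_prod, Set.ncard_singleton,
    hleaves, one_mul]

end Star

theorem stmt_12 [Fintype W] [Nonempty W] (m : ℕ) (hm : 3 ≤ m) (H : SimpleGraph W)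
    (hH : ∀ v : W, ∃ w, H.Adj v w) :
    upperDom ((_root_.starGraph m).boxProd H) > Fintype.card W := by
  obtain ⟨D, hD⟩ := exists_isMinDomSet H
  have hD_pos : 0 < D.ncard := (Set.ncard_pos).2 hD.1.nonempty
  have : NeZero m := ⟨by omega⟩
  calc Fintype.card W = Dᶜ.ncard + D.ncard := by
        rw [Set.ncard_compl_add_ncard, Nat.card_eq_fintype_card]
    _ < Dᶜ.ncard + (m - 1) * D.ncard :=
        Nat.add_lt_add_left (lt_mul_of_one_lt_left hD_pos (by omega)) _
    _ = (starBoxSet m D).ncard := (ncard_starBoxSet D).symm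
    _ ≤ upperDom ((_root_.starGraph m).boxProd H) :=
        le_upperDom (isMinDomSet_starBoxSet (by omega) hD (hD.isDomSet_compl hH))
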